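/- Injectivity of the divided-power operator: for every integer m ≥ 1, the ℂ-linear map ω : F_m → F_{m−2} is injective. -/

import Mathlib

open scoped BigOperators

noncomputable section

/-- The ring `𝒟 = ℂ[t₁,t₃,t₅,…]`: variable `k : ℕ` stands for `t_{2k+1}`. -/
abbrev Dring : Type := MvPolynomial ℕ ℂ

/-- The series `∑_{k≥1} t_{2k-1} z^{2k-1}/(2k-1)`. -/
def genX : PowerSeries Dring :=
  PowerSeries.mk fun n =>
    if n % 2 = 1 then ((n : ℂ)⁻¹) • (MvPolynomial.X ((n - 1) / 2) : Dring) else 0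

/-- `T n` is the polynomial `T₋ₙ`, the `n`-th coefficient of `exp(genX) = ∑_j genX^j/j!`
(the sum may be truncated at `j = n` since `genX` has zero constant term). -/
def T (n : ℕ) : Dring :=
  ∑ j ∈ Finset.range (n + 1),
    ((j.factorial : ℂ)⁻¹) • (PowerSeries.coeff n (genX ^ j))

/-- Index of a basis vector of the fermionic Fock space: a pair `(R, S)` of finite
sets of modes; `k ∈ R` stands for the factor `b_{k+1}` and `k ∈ S` for `a_{k+1}`. -/
abbrev FockIdx : Type := Finset ℕ × Finset ℕ

/-- The full fermionic Fock space `⊕_m F_m`, with basis `FockIdx`. -/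
abbrev Fock : Type := FockIdx →₀ ℂ

/-- `𝒟 ⊗ (⊕_m F_m)`, a free `𝒟`-module with basis `FockIdx`. -/
abbrev DFock : Type := FockIdx →₀ Dring

def charge (x : FockIdx) : ℤ := (x.1.card : ℤ) - x.2.card

def fsingle (x : FockIdx) : Fock := Finsupp.single x 1

/-- `αₙ` (for `n = k+1`, `k : ℕ`): wedging with `a_{k+1}` with the Koszul sign `(-1)^{deg ξ}`. -/
def alpha (k : ℕ) : Fock →ₗ[ℂ] Fock :=
  Finsupp.lsum ℂ fun x => LinearMap.toSpanSingleton ℂ Fock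
    (if k ∈ x.2 then 0 else
      (((-1 : ℂ) ^ x.1.card) * ((-1 : ℂ) ^ (x.2.filter (· < k)).card)) •
        fsingle (x.1, insert k x.2))

/-- `βₙ` (for `n = k+1`): contraction with `b_{k+1}*`, with Koszul signs. -/
def beta (k : ℕ) : Fock →ₗ[ℂ] Fock :=
  Finsupp.lsum ℂ fun x => LinearMap.toSpanSingleton ℂ Fock
    (if k ∈ x.1 then ((-1 : ℂ) ^ (x.1.filter (· < k)).card) • fsingle (x.1.erase k, x.2)
     else 0)

/-- `ω = ∑_{n≥1} αₙ βₙ` (on each basis vector only finitely many terms are nonzero). -/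
def omega : Fock →ₗ[ℂ] Fock :=
  Finsupp.lsum ℂ fun x => LinearMap.toSpanSingleton ℂ Fock
    (∑ k ∈ x.1, alpha k (beta k (fsingle x)))

/-- The charge-`m` Fock space `F_m ⊆ Fock`. -/
def FockC (m : ℤ) : Submodule ℂ Fock := Finsupp.supported ℂ ℂ {x | charge x = m}

def dsingle (x : FockIdx) : DFock := Finsupp.single x 1

/-- `αₙ`, extended `𝒟`-linearly to `𝒟 ⊗ Fock`. -/
def dAlpha (k : ℕ) : DFock →ₗ[Dring] DFock :=
  Finsupp.lsum Dring fun x => LinearMap.toSpanSingleton Dring DFock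
    (if k ∈ x.2 then 0 else
      (((-1 : Dring) ^ x.1.card) * ((-1 : Dring) ^ (x.2.filter (· < k)).card)) •
        dsingle (x.1, insert k x.2))

/-- `βₙ`, extended `𝒟`-linearly to `𝒟 ⊗ Fock`. -/
def dBeta (k : ℕ) : DFock →ₗ[Dring] DFock :=
  Finsupp.lsum Dring fun x => LinearMap.toSpanSingleton Dring DFock
    (if k ∈ x.1 then ((-1 : Dring) ^ (x.1.filter (· < k)).card) • dsingle (x.1.erase k, x.2)
     else 0)

/-- `d = ∑_{n≥1} T₋₍₂ₙ₋₁₎ βₙ : 𝒟⊗F_m → 𝒟⊗F_{m-1}`. -/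
def dOp : DFock →ₗ[Dring] DFock :=
  Finsupp.lsum Dring fun x => LinearMap.toSpanSingleton Dring DFock
    (∑ k ∈ x.1, T (2 * k + 1) • dBeta k (dsingle x))

/-- `ω = ∑_{n≥1} αₙ βₙ`, extended `𝒟`-linearly. -/
def dOmega : DFock →ₗ[Dring] DFock :=
  Finsupp.lsum Dring fun x => LinearMap.toSpanSingleton Dring DFock
    (∑ k ∈ x.1, dAlpha k (dBeta k (dsingle x)))

/-- The charge-`m` part `𝒟 ⊗ F_m`, as a `𝒟`-submodule. -/
def DFockC (m : ℤ) : Submodule Dring DFock := Finsupp.supported Dring Dring {x | charge x = m}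

/-!
Let `ω† = omegaAdj` be the adjoint of `ω` for the hermitian form `herm` in which the basis
vectors `(R, S)` are orthonormal: it moves one mode from the `a`-side back to the `b`-side, with
the same Koszul sign. On a basis vector, the terms of `ω† ω` and `ω ω†` that move two different
modes agree, while the diagonal terms contribute `#(R \ S)` and `#(S \ R)` respectively, so
`ω† ω - ω ω†` is the charge, i.e. multiplication by `m` on `F_m`. Hence for `v ∈ F_m` with
`ω v = 0`, `0 = ⟨v, ω† ω v⟩ = ‖ω† v‖² + m ‖v‖²`, which forces `v = 0` when `m ≥ 1`.
-/

namespace Fock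

open Finset

section FinsetLemmas

variable {α : Type*}

lemma filter_lt_erase_self [LinearOrder α] (A : Finset α) (k : α) :
    {a ∈ A.erase k | a < k} = {a ∈ A | a < k} := by
  rw [filter_erase, erase_eq_of_notMem (by simp)]

lemma filter_lt_insert_self [LinearOrder α] (A : Finset α) (k : α) :
    {a ∈ insert k A | a < k} = {a ∈ A | a < k} := by
  rw [filter_insert, if_neg (lt_irrefl k)]

lemma card_filter_insert_of_notMem [DecidableEq α] (p : α → Prop) [DecidablePred p] {a : α}
    {A : Finset α} (h : a ∉ A) :
    #{x ∈ insert a A | p x} = #{x ∈ A | p x} + if p a then 1 else 0 := by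
  rw [filter_insert]
  split_ifs
  · exact card_insert_of_notMem fun hm => h (mem_filter.mp hm).1
  · rfl

lemma insert_sdiff_erase_self [DecidableEq α] (A B : Finset α) (a : α) :
    insert a A \ B.erase a = insert a (A \ B) := by
  ext c
  by_cases hca : c = a <;> simp [hca]

end FinsetLemmas

/-- The coefficient of `(R, insert k S)` in `ω (insert k R, S)` when `k ∉ R ∪ S`: the factor
`(-1) ^ #{a ∈ R | a < k}` comes from `βₖ₊₁`, the other two from `αₖ₊₁`. -/
def koszulSign (R S : Finset ℕ) (k : ℕ) : ℂ :=
  (-1) ^ #{a ∈ R | a < k} * (-1) ^ #R * (-1) ^ #{b ∈ S | b < k}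

lemma koszulSign_insert_self (R S : Finset ℕ) (k : ℕ) :
    koszulSign R (insert k S) k = koszulSign R S k := by
  rw [koszulSign, koszulSign, filter_lt_insert_self]

lemma koszulSign_erase_self (R S : Finset ℕ) (k : ℕ) :
    koszulSign R (S.erase k) k = koszulSign R S k := by
  rw [koszulSign, koszulSign, filter_lt_erase_self]

lemma koszulSign_mul_self (R S : Finset ℕ) (k : ℕ) :
    koszulSign R S k * koszulSign R S k = 1 := by
  rw [← sq, koszulSign]
  simp_rw [mul_pow, pow_right_comm _ _ 2]
  simp

lemma conj_koszulSign (R S : Finset ℕ) (k : ℕ) :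
    starRingEnd ℂ (koszulSign R S k) = koszulSign R S k := by
  simp [koszulSign]

/-- The off-diagonal terms of `ω† ω` and `ω ω†` carry the same sign. -/
lemma koszulSign_mul_koszulSign_comm {R S : Finset ℕ} {k l : ℕ} (hkR : k ∈ R) (hkS : k ∉ S)
    (hlS : l ∈ S) (hlR : l ∉ R) :
    koszulSign (R.erase k) S k * koszulSign (R.erase k) (insert k S) l =
      koszulSign R S l * koszulSign (insert l (R.erase k)) (S.erase l) k := by
  obtain ⟨R', hkR', rfl⟩ : ∃ R', k ∉ R' ∧ R = insert k R' :=
    ⟨R.erase k, notMem_erase k R, (insert_erase hkR).symm⟩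
  obtain ⟨S', hlS', rfl⟩ : ∃ S', l ∉ S' ∧ S = insert l S' :=
    ⟨S.erase l, notMem_erase l S, (insert_erase hlS).symm⟩
  have hkS' : k ∉ S' := fun h => hkS (mem_insert_of_mem h)
  have hlR' : l ∉ R' := fun h => hlR (mem_insert_of_mem h)
  rw [erase_insert hkR', erase_insert hlS']
  simp only [koszulSign, card_filter_insert_of_notMem _ hkR', card_filter_insert_of_notMem _ hlR',
    card_filter_insert_of_notMem _ hlS', card_filter_insert_of_notMem _ hkS,
    card_insert_of_notMem hkR', card_insert_of_notMem hlR', lt_irrefl, if_false, pow_add]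
  ring

lemma single_eq_smul_fsingle (x : FockIdx) (c : ℂ) : Finsupp.single x c = c • fsingle x := by
  simp [fsingle]

lemma omega_fsingle (R S : Finset ℕ) :
    omega (fsingle (R, S)) =
      ∑ k ∈ R \ S, koszulSign (R.erase k) S k • fsingle (R.erase k, insert k S) := by
  rw [omega, fsingle, Finsupp.lsum_single, LinearMap.toSpanSingleton_apply, one_smul,
    sdiff_eq_filter, sum_filter]
  refine sum_congr rfl fun k hk => ?_
  simp only [beta, alpha, fsingle, Finsupp.lsum_single, LinearMap.toSpanSingleton_apply,
    one_smul, if_pos hk, map_smul]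
  split_ifs
  · simp
  · rw [smul_smul, koszulSign, filter_lt_erase_self]
    ring_nf

def omegaAdj : Fock →ₗ[ℂ] Fock :=
  Finsupp.lsum ℂ fun x => LinearMap.toSpanSingleton ℂ Fock
    (∑ l ∈ x.2 \ x.1, koszulSign x.1 x.2 l • fsingle (insert l x.1, x.2.erase l))

lemma omegaAdj_fsingle (R S : Finset ℕ) :
    omegaAdj (fsingle (R, S)) =
      ∑ l ∈ S \ R, koszulSign R S l • fsingle (insert l R, S.erase l) := by
  simp [omegaAdj, fsingle]

lemma omegaAdj_omega_fsingle (R S : Finset ℕ) :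
    omegaAdj (omega (fsingle (R, S))) =
      #(R \ S) • fsingle (R, S) + ∑ k ∈ R \ S, ∑ l ∈ S \ R,
        (koszulSign (R.erase k) S k * koszulSign (R.erase k) (insert k S) l) •
          fsingle (insert l (R.erase k), insert k (S.erase l)) := by
  rw [← sum_const, ← sum_add_distrib, omega_fsingle, map_sum]
  refine sum_congr rfl fun k hk => ?_
  obtain ⟨hkR, hkS⟩ := mem_sdiff.mp hk
  rw [map_smul, omegaAdj_fsingle, insert_sdiff_erase_self, sum_insert (by simp [hkR]),
    smul_add, smul_smul, smul_sum, insert_erase hkR, erase_insert hkS, koszulSign_insert_self,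
    koszulSign_mul_self, one_smul]
  refine congrArg _ (sum_congr rfl fun l hl => ?_)
  have hkl : k ≠ l := by rintro rfl; exact hkS (mem_sdiff.mp hl).1
  rw [smul_smul, erase_insert_of_ne hkl]

lemma omega_omegaAdj_fsingle (R S : Finset ℕ) :
    omega (omegaAdj (fsingle (R, S))) =
      #(S \ R) • fsingle (R, S) + ∑ l ∈ S \ R, ∑ k ∈ R \ S,
        (koszulSign R S l * koszulSign (insert l (R.erase k)) (S.erase l) k) •
          fsingle (insert l (R.erase k), insert k (S.erase l)) := by
  rw [← sum_const, ← sum_add_distrib, omegaAdj_fsingle, map_sum]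
  refine sum_congr rfl fun l hl => ?_
  obtain ⟨hlS, hlR⟩ := mem_sdiff.mp hl
  rw [map_smul, omega_fsingle, insert_sdiff_erase_self, sum_insert (by simp [hlS]),
    smul_add, smul_smul, smul_sum, insert_erase hlS, erase_insert hlR, koszulSign_erase_self,
    koszulSign_mul_self, one_smul]
  refine congrArg _ (sum_congr rfl fun k hk => ?_)
  have hlk : l ≠ k := by rintro rfl; exact hlR (mem_sdiff.mp hk).1
  rw [smul_smul, erase_insert_of_ne hlk]

lemma card_sdiff_sub_card_sdiff (R S : Finset ℕ) :
    (#(R \ S) : ℤ) - #(S \ R) = charge (R, S) := by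
  have hR := card_sdiff_add_card_inter R S
  have hS := card_sdiff_add_card_inter S R
  rw [inter_comm] at hS
  simp only [charge]
  omega

lemma omegaAdj_omega_fsingle_eq (x : FockIdx) :
    omegaAdj (omega (fsingle x)) =
      omega (omegaAdj (fsingle x)) + (charge x : ℂ) • fsingle x := by
  obtain ⟨R, S⟩ := x
  have hcross : ∀ k ∈ R \ S, ∀ l ∈ S \ R,
      koszulSign (R.erase k) S k * koszulSign (R.erase k) (insert k S) l =
        koszulSign R S l * koszulSign (insert l (R.erase k)) (S.erase l) k :=
    fun k hk l hl => koszulSign_mul_koszulSign_comm (mem_sdiff.mp hk).1 (mem_sdiff.mp hk).2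
      (mem_sdiff.mp hl).1 (mem_sdiff.mp hl).2
  rw [omegaAdj_omega_fsingle, omega_omegaAdj_fsingle, sum_comm (s := S \ R),
    sum_congr rfl fun k hk => sum_congr rfl fun l hl => by rw [hcross k hk l hl],
    ← card_sdiff_sub_card_sdiff, ← Nat.cast_smul_eq_nsmul ℂ, ← Nat.cast_smul_eq_nsmul ℂ]
  push_cast
  rw [sub_smul]
  abel

lemma omegaAdj_omega_of_mem {m : ℤ} {v : Fock} (hv : v ∈ FockC m) :
    omegaAdj (omega v) = omega (omegaAdj v) + (m : ℂ) • v := by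
  rw [FockC, Finsupp.supported_eq_span_single] at hv
  induction hv using Submodule.span_induction with
  | mem _ hx =>
    obtain ⟨x, hx, rfl⟩ := hx
    have hx : charge x = m := hx
    exact hx ▸ omegaAdj_omega_fsingle_eq x
  | zero => simp
  | add v w _ _ hv hw =>
    simp only [map_add, hv, hw, smul_add]
    abel
  | smul c v _ hv => simp only [map_smul, hv, smul_add, smul_comm c]

lemma omegaAdj_fsingle_apply (x y : FockIdx) :
    omegaAdj (fsingle x) y = omega (fsingle y) x := by
  obtain ⟨R, S⟩ := x
  obtain ⟨R', S'⟩ := y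
  have hsupp : {l ∈ S \ R | (insert l R, S.erase l) = (R', S')} =
      {k ∈ R' \ S' | (R'.erase k, insert k S') = (R, S)} := by
    ext k
    simp only [mem_filter, mem_sdiff, Prod.mk.injEq]
    constructor
    · rintro ⟨⟨hkS, hkR⟩, rfl, rfl⟩
      simp [hkR, hkS]
    · rintro ⟨⟨hkR', hkS'⟩, rfl, rfl⟩
      simp [hkR', hkS']
  rw [omegaAdj_fsingle, omega_fsingle]
  simp only [Finsupp.finsetSum_apply, Finsupp.smul_apply, fsingle, Finsupp.single_apply,
    smul_eq_mul, mul_ite, mul_one, mul_zero]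
  rw [← sum_filter, ← sum_filter, hsupp]
  refine sum_congr rfl fun k hk => ?_
  simp only [mem_filter, mem_sdiff, Prod.mk.injEq] at hk
  obtain ⟨-, rfl, rfl⟩ := hk
  exact koszulSign_insert_self _ _ _

lemma conj_omegaAdj_fsingle_apply (x y : FockIdx) :
    starRingEnd ℂ (omegaAdj (fsingle x) y) = omegaAdj (fsingle x) y := by
  obtain ⟨R, S⟩ := x
  rw [omegaAdj_fsingle]
  simp [Finsupp.finsetSum_apply, fsingle, Finsupp.single_apply, apply_ite (starRingEnd ℂ),
    conj_koszulSign]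

def herm : Fock →ₗ⋆[ℂ] Fock →ₗ[ℂ] ℂ :=
  LinearMap.mk₂'ₛₗ (starRingEnd ℂ) (RingHom.id ℂ)
    (fun v w => v.sum fun x a => starRingEnd ℂ a * w x)
    (fun _ _ _ => Finsupp.sum_add_index' (by simp) (by simp [add_mul]))
    (fun c v w => by
      rw [Finsupp.sum_smul_index' (by simp), Finsupp.smul_sum]
      simp [mul_assoc])
    (fun v w₁ w₂ => by simp [mul_add, Finsupp.sum_add])
    (fun c v w => by simp [Finsupp.mul_sum, mul_left_comm])

lemma herm_apply (v w : Fock) : herm v w = v.sum fun x a => starRingEnd ℂ a * w x := rfl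

lemma herm_fsingle_left (x : FockIdx) (w : Fock) : herm (fsingle x) w = w x := by
  simp [herm_apply, fsingle]

lemma herm_fsingle_right (v : Fock) (y : FockIdx) : herm v (fsingle y) = starRingEnd ℂ (v y) := by
  rw [herm_apply, Finsupp.sum_eq_single y (fun x _ hxy => by simp [fsingle, hxy.symm]) (by simp)]
  simp [fsingle]

lemma herm_omegaAdj (v w : Fock) : herm (omegaAdj v) w = herm v (omega w) := by
  have h : herm.comp omegaAdj = herm.compl₂ omega := by
    refine Finsupp.lhom_ext fun x a => Finsupp.lhom_ext fun y b => ?_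
    simp only [LinearMap.comp_apply, LinearMap.compl₂_apply, single_eq_smul_fsingle, map_smul,
      LinearMap.map_smulₛₗ₂]
    rw [herm_fsingle_left, herm_fsingle_right, conj_omegaAdj_fsingle_apply,
      omegaAdj_fsingle_apply]
  exact LinearMap.congr_fun₂ h v w

lemma re_herm_self (v : Fock) : (herm v v).re = ∑ x ∈ v.support, Complex.normSq (v x) := by
  simp [herm_apply, Finsupp.sum, Complex.normSq_apply]

lemma re_herm_self_nonneg (v : Fock) : 0 ≤ (herm v v).re :=
  re_herm_self v ▸ sum_nonneg fun x _ => Complex.normSq_nonneg (v x)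

lemma re_herm_self_pos {v : Fock} (hv : v ≠ 0) : 0 < (herm v v).re := by
  rw [re_herm_self]
  exact sum_pos (fun x hx => Complex.normSq_pos.mpr (Finsupp.mem_support_iff.mp hx))
    (Finsupp.support_nonempty_iff.mpr hv)

lemma herm_omegaAdj_omega_of_mem {m : ℤ} {v : Fock} (hv : v ∈ FockC m) :
    herm v (omegaAdj (omega v)) = herm (omegaAdj v) (omegaAdj v) + m * herm v v := by
  rw [omegaAdj_omega_of_mem hv, map_add, map_smul, ← herm_omegaAdj, smul_eq_mul]

end Fock

open Fock in
/-- For every integer `m ≥ 1`, the map `ω : F_m → F_{m-2}` is injective. -/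
theorem omega_injective (m : ℤ) (hm : 1 ≤ m) :
    ∀ v ∈ FockC m, omega v = 0 → v = 0 := by
  intro v hv hωv
  by_contra hv0
  have h := congrArg Complex.re (herm_omegaAdj_omega_of_mem hv)
  rw [hωv, map_zero, map_zero] at h
  simp only [Complex.zero_re, Complex.add_re, Complex.mul_re, Complex.intCast_re,
    Complex.intCast_im, zero_mul, sub_zero] at h
  have hm' : (0 : ℝ) < m := by exact_mod_cast hm
  nlinarith [re_herm_self_nonneg (omegaAdj v), re_herm_self_pos hv0]

end
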